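/- For all signed compositions μ, ν of n and every d ∈ 𝒟_{μ^+ν^+}, the subgroup d^{−1} G_μ d ∩ G_ν is a reflection subgroup of G_{r,n}, i.e. it is generated by a subset of Π (equivalently, it equals G_σ for some signed composition σ of n). -/

import Mathlib

open Equiv SemidirectProduct

namespace CycSol

/-- The action of the symmetric group on the "torus" `(ℤ/r)^n` by permuting coordinates. -/
def act (r n : ℕ) : Equiv.Perm (Fin n) →* MulAut (Multiplicative (Fin n → ZMod r)) where
  toFun w :=
    { toFun := fun f => Multiplicative.ofAdd fun i => Multiplicative.toAdd f (w⁻¹ i)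
      invFun := fun f => Multiplicative.ofAdd fun i => Multiplicative.toAdd f (w i)
      left_inv := fun f => by
        show Multiplicative.ofAdd (fun i => Multiplicative.toAdd f (w⁻¹ (w i))) = f
        simp
      right_inv := fun f => by
        show Multiplicative.ofAdd (fun i => Multiplicative.toAdd f (w (w⁻¹ i))) = f
        simp
      map_mul' := fun f g => rfl }
  map_one' := by
    ext f
    rfl
  map_mul' := fun u v => by
    ext f
    rfl

/-- The wreath product `(ℤ/r) ≀ S_n`, i.e. the complex reflection group `G(r,1,n)`. -/
abbrev Grn (r n : ℕ) :=
  SemidirectProduct (Multiplicative (Fin n → ZMod r)) (Equiv.Perm (Fin n)) (act r n)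

/-- The generator `t_i`. -/
def tGen (r n : ℕ) (i : Fin n) : Grn r n :=
  inl (Multiplicative.ofAdd (Pi.single i 1))

/-- `sGen i j` is the transposition `(i,j)`, viewed inside `G(r,1,n)`. -/
def sGen (r n : ℕ) (i j : Fin n) : Grn r n := inr (Equiv.swap i j)

/-- `t^α` for a vector `α ∈ {0,…,r-1}^n`. -/
def tPow (r n : ℕ) (α : Fin n → Fin r) : Grn r n :=
  inl (Multiplicative.ofAdd fun i => ((α i : ℕ) : ZMod r))

/-- The generating set `Π = {t_1,…,t_n, s_1,…,s_{n-1}}`. -/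
def PiSet (r n : ℕ) : Set (Grn r n) :=
  {g | (∃ i : Fin n, g = tGen r n i) ∨
       (∃ i j : Fin n, (j : ℕ) = (i : ℕ) + 1 ∧ g = sGen r n i j)}

/-- The `Π`-length of an element of `G(r,1,n)`. -/
noncomputable def len (r n : ℕ) (g : Grn r n) : ℕ :=
  sInf {k | ∃ l : List (Grn r n), l.length = k ∧ (∀ x ∈ l, x ∈ PiSet r n) ∧ l.prod = g}

/-- A signed composition of `n`: a list of nonzero integers whose absolute values sum to `n`. -/
def IsSignedComp (n : ℕ) (μ : List ℤ) : Prop :=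
  (∀ x ∈ μ, x ≠ 0) ∧ (μ.map Int.natAbs).sum = n

/-- The type of signed compositions of `n`. -/
abbrev SComp (n : ℕ) := {l : List ℤ // IsSignedComp n l}

/-- `μ̄_i = |μ_1| + ⋯ + |μ_i|`. -/
def absPrefix (μ : List ℤ) (i : ℕ) : ℕ := ((μ.take i).map Int.natAbs).sum

/-- The subset `Π_μ ⊆ Π` attached to a signed composition `μ` (here `t_j, s_j` are indexed by
`j : Fin n`, i.e. `0`-based). -/
def PiMu (r n : ℕ) (μ : List ℤ) : Set (Grn r n) :=
  {g | (∃ j : Fin n, (∃ i, i < μ.length ∧ 0 < μ.getD i 0 ∧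
          absPrefix μ i ≤ (j : ℕ) ∧ (j : ℕ) < absPrefix μ (i + 1)) ∧ g = tGen r n j) ∨
       (∃ j k : Fin n, (k : ℕ) = (j : ℕ) + 1 ∧ (∃ i, i < μ.length ∧
          absPrefix μ i ≤ (j : ℕ) ∧ (k : ℕ) < absPrefix μ (i + 1)) ∧ g = sGen r n j k)}

/-- The reflection subgroup `G_μ = ⟨Π_μ⟩`. -/
def Gmu (r n : ℕ) (μ : List ℤ) : Subgroup (Grn r n) := Subgroup.closure (PiMu r n μ)

/-- The subgroup `T = (ℤ/r)^n` of `G(r,1,n)`. -/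
def Tsub (r n : ℕ) : Subgroup (Grn r n) :=
  (inl : Multiplicative (Fin n → ZMod r) →* Grn r n).range

/-- The subgroup `S_n` of `G(r,1,n)`. -/
def Ssub (r n : ℕ) : Subgroup (Grn r n) :=
  (inr : Equiv.Perm (Fin n) →* Grn r n).range

/-- `T_{-μ}`: the subgroup of `T` generated by those `t_i` not lying in `G_μ`. -/
def Tneg (r n : ℕ) (μ : List ℤ) : Subgroup (Grn r n) :=
  Subgroup.closure {g | ∃ i : Fin n, tGen r n i ∉ Gmu r n μ ∧ g = tGen r n i}

/-- The Young subgroup `S_{μ^+} = G_μ ∩ S_n`, as a subgroup of `S_n`. -/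
def youngS (r n : ℕ) (μ : List ℤ) : Subgroup (Equiv.Perm (Fin n)) :=
  (Gmu r n μ).comap (inr : Equiv.Perm (Fin n) →* Grn r n)

/-- `𝒟_{μ^+}`: the permutations of minimal (Coxeter = `Π`-) length in their right coset
`S_{μ^+} w`. -/
noncomputable def Dset (r n : ℕ) (μ : List ℤ) : Set (Equiv.Perm (Fin n)) :=
  {d | ∀ w : Equiv.Perm (Fin n), w * d⁻¹ ∈ youngS r n μ →
        len r n (inr d) ≤ len r n (inr w)}

/-- `𝒟_{μ^+ν^+} = 𝒟_{μ^+} ∩ 𝒟_{ν^+}^{-1}`. -/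
noncomputable def DD (r n : ℕ) (μ ν : List ℤ) : Set (Equiv.Perm (Fin n)) :=
  Dset r n μ ∩ {d | d⁻¹ ∈ Dset r n ν}

/-- `𝓔_μ`: the elements of minimal `Π`-length in their right coset `G_μ e`. -/
noncomputable def Ecal (r n : ℕ) (μ : List ℤ) : Set (Grn r n) :=
  {e | ∀ g : Grn r n, g * e⁻¹ ∈ Gmu r n μ → len r n e ≤ len r n g}

/-- `E_μ = Σ_{e ∈ 𝓔_μ} e` in the group algebra `R G(r,1,n)`. -/
noncomputable def Emu (R : Type) [CommRing R] (r n : ℕ) (μ : List ℤ) :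
    MonoidAlgebra R (Grn r n) :=
  ∑ᶠ e ∈ Ecal r n μ, MonoidAlgebra.of R (Grn r n) e

/-- The generating set `{E_μ : μ a signed composition of n}` of the cyclotomic Solomon
algebra. -/
def SolSet (R : Type) [CommRing R] (r n : ℕ) : Set (MonoidAlgebra R (Grn r n)) :=
  {x | ∃ μ : List ℤ, IsSignedComp n μ ∧ x = Emu R r n μ}

/-- The cyclotomic Solomon algebra `Sol(G(r,1,n))`. -/
noncomputable def Sol (R : Type) [CommRing R] (r n : ℕ) :
    Subalgebra R (MonoidAlgebra R (Grn r n)) :=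
  Algebra.adjoin R (SolSet R r n)

/-!
Colour the positions `0, …, n-1` by a monotone map `P` and fix a set `S` of colours. The
elements of `G(r,1,n)` whose permutation preserves colours and whose torus part is supported on
positions with colour in `S` form a subgroup, generated (as for Young subgroups, by sorting
along descents) by the `t_j` with colour in `S` and the `s_j` joining two positions of equal
colour. `G_μ` is the case where a position is coloured by the part of `μ` containing it.
Conjugating by `d` recolours position `j` with the colour of `d j`, and intersecting two such
subgroups pairs the colourings. The pair (part of `ν` containing `j`, part of `μ` containing
`d j`) is lexicographically monotone in `j` because `d` increases on each part of `ν`: on `S_n`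
the `Π`-length counts inversions, so a descent of `d` inside a part of `ν` would be removed by a
simple reflection of `S_ν`, shortening `d⁻¹` within its coset. Finally, every monotone colouring
is the block structure of a signed composition.
-/

section Inversions

variable {n : ℕ}

lemma Fin.monotone_of_adjacent_le {β : Type*} [Preorder β] {f : Fin n → β}
    (h : ∀ j k : Fin n, (k : ℕ) = j + 1 → f j ≤ f k) : Monotone f := by
  cases n with
  | zero => exact fun j => j.elim0
  | succ m => exact Fin.monotone_iff_le_succ.2 fun j => h _ _ (by simp)

lemma swap_lt_swap_iff_of_adjacent {j k a b : Fin n} (hk : (k : ℕ) = j + 1)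
    (hab : ¬(a = j ∧ b = k)) (hba : ¬(a = k ∧ b = j)) :
    swap j k a < swap j k b ↔ a < b := by
  simp only [swap_apply_def, Fin.lt_def, Fin.ext_iff] at *
  split_ifs <;> omega

def inversions (w : Perm (Fin n)) : Finset (Fin n × Fin n) :=
  Finset.univ.filter fun p => p.1 < p.2 ∧ w p.2 < w p.1

def invCount (w : Perm (Fin n)) : ℕ := (inversions w).card

lemma mem_inversions {w : Perm (Fin n)} {p : Fin n × Fin n} :
    p ∈ inversions w ↔ p.1 < p.2 ∧ w p.2 < w p.1 := by
  simp [inversions]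

lemma invCount_one : invCount (1 : Perm (Fin n)) = 0 := by
  simp only [invCount, Finset.card_eq_zero, Finset.eq_empty_iff_forall_notMem, mem_inversions]
  exact fun p h => lt_asymm h.1 h.2

lemma invCount_inv (w : Perm (Fin n)) : invCount w⁻¹ = invCount w := by
  refine (Finset.card_equiv ((w.prodCongr w).trans (Equiv.prodComm _ _)) ?_).symm
  rintro ⟨a, b⟩
  simp [mem_inversions, and_comm]

lemma invCount_mul_swap_of_lt {j k : Fin n} (hk : (k : ℕ) = j + 1) {w : Perm (Fin n)}
    (hw : w j < w k) : invCount (w * swap j k) = invCount w + 1 := by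
  have hjk : j < k := by rw [Fin.lt_def]; omega
  have hinv : inversions (w * swap j k) =
      insert (j, k) ((inversions w).map ((swap j k).prodCongr (swap j k)).toEmbedding) := by
    ext ⟨a, b⟩
    simp only [mem_inversions, Finset.mem_insert, Finset.mem_map_equiv, Prod.mk.injEq,
      Perm.mul_apply, prodCongr_symm, symm_swap, prodCongr_apply, Prod.map]
    by_cases hab : a = j ∧ b = k
    · obtain ⟨rfl, rfl⟩ := hab
      simp [hjk, hw]
    by_cases hba : a = k ∧ b = j
    · obtain ⟨rfl, rfl⟩ := hba
      simp [hjk.ne', hw.le, not_lt.2 hjk.le]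
    rw [swap_lt_swap_iff_of_adjacent hk hab hba]
    tauto
  rw [invCount, invCount, hinv, Finset.card_insert_of_notMem, Finset.card_map]
  simp [mem_inversions, Finset.mem_map_equiv, not_lt.2 hjk.le]

lemma invCount_mul_swap_of_gt {j k : Fin n} (hk : (k : ℕ) = j + 1) {w : Perm (Fin n)}
    (hw : w k < w j) : invCount (w * swap j k) + 1 = invCount w := by
  have := invCount_mul_swap_of_lt hk (w := w * swap j k) (by simpa using hw)
  rwa [mul_assoc, swap_mul_self, mul_one, eq_comm] at this

lemma invCount_mul_swap_le {j k : Fin n} (hk : (k : ℕ) = j + 1) (w : Perm (Fin n)) :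
    invCount (w * swap j k) ≤ invCount w + 1 := by
  have hjk : j ≠ k := by rw [Ne, Fin.ext_iff]; omega
  rcases lt_or_gt_of_ne (w.injective.ne hjk) with hw | hw
  · exact (invCount_mul_swap_of_lt hk hw).le
  · have := invCount_mul_swap_of_gt hk hw
    omega

lemma exists_adjacent_descent {w : Perm (Fin n)} (hw : w ≠ 1) :
    ∃ j k : Fin n, (k : ℕ) = j + 1 ∧ w k < w j := by
  by_contra! h
  have hmono : StrictMono w := (Fin.monotone_of_adjacent_le h).strictMono_of_injective w.injective
  exact hw (Equiv.ext fun j => hmono.apply_eq)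

theorem Perm.induction_on_descent {motive : Perm (Fin n) → Prop} (one : motive 1)
    (step : ∀ (w : Perm (Fin n)) (j k : Fin n), (k : ℕ) = j + 1 → w k < w j →
      motive (w * swap j k) → motive w) (w : Perm (Fin n)) : motive w := by
  induction h : invCount w using Nat.strong_induction_on generalizing w with
  | _ m ih =>
  by_cases hw : w = 1
  · exact hw ▸ one
  obtain ⟨j, k, hk, hjk⟩ := exists_adjacent_descent hw
  exact step w j k hk hjk (ih _ (by have := invCount_mul_swap_of_gt hk hjk; omega) _ rfl)

end Inversions

section Length

variable {r n : ℕ}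

lemma sGen_mem_PiSet {j k : Fin n} (hk : (k : ℕ) = j + 1) : sGen r n j k ∈ PiSet r n :=
  Or.inr ⟨j, k, hk, rfl⟩

lemma invCount_rightHom_prod_le (l : List (Grn r n)) (hl : ∀ x ∈ l, x ∈ PiSet r n) :
    invCount (rightHom l.prod) ≤ l.length := by
  induction l using List.reverseRecOn with
  | nil => simp [invCount_one]
  | append_singleton l x ih =>
    simp only [List.mem_append, List.mem_singleton] at hl
    have := ih fun y hy => hl y (Or.inl hy)
    rw [List.prod_append, List.prod_singleton, map_mul, List.length_append,
      List.length_singleton]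
    rcases hl x (Or.inr rfl) with ⟨i, rfl⟩ | ⟨j, k, hk, rfl⟩
    · simpa [tGen] using this.trans (Nat.le_succ _)
    · simpa [sGen] using (invCount_mul_swap_le hk _).trans (Nat.add_le_add_right this 1)

lemma exists_PiSet_word (w : Perm (Fin n)) :
    ∃ l : List (Grn r n), (∀ x ∈ l, x ∈ PiSet r n) ∧ l.prod = inr w ∧
      l.length = invCount w := by
  induction w using Perm.induction_on_descent with
  | one => exact ⟨[], by simp, by simp, invCount_one.symm⟩
  | step w j k hk hjk ih =>
    obtain ⟨l, hl, hprod, hlen⟩ := ih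
    refine ⟨l ++ [sGen r n j k], ?_, ?_, ?_⟩
    · simpa [or_imp, forall_and] using ⟨hl, sGen_mem_PiSet hk⟩
    · rw [List.prod_append, hprod, List.prod_singleton, sGen, ← map_mul, mul_swap_mul_self]
    · have := invCount_mul_swap_of_gt hk hjk
      simp only [List.length_append, List.length_singleton]
      omega

lemma len_inr (w : Perm (Fin n)) : len r n (inr w) = invCount w := by
  obtain ⟨l, hl, hprod, hlen⟩ := exists_PiSet_word (r := r) w
  refine le_antisymm (hlen ▸ Nat.sInf_le ⟨l, rfl, hl, hprod⟩)
    (le_csInf ⟨_, l, rfl, hl, hprod⟩ ?_)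
  rintro _ ⟨l', rfl, hl', hprod'⟩
  simpa [hprod'] using invCount_rightHom_prod_le l' hl'

end Length

section BlockSubgroup

variable {α β : Type*}

def blockSubgroup (r n : ℕ) (P : Fin n → α) (S : α → Prop) : Subgroup (Grn r n) where
  carrier :=
    {g | (∀ j, ¬S (P j) → Multiplicative.toAdd g.left j = 0) ∧ ∀ j, P (g.right j) = P j}
  one_mem' := ⟨fun _ _ => rfl, fun _ => rfl⟩
  mul_mem' := by
    rintro g h ⟨hg, hg'⟩ ⟨hh, hh'⟩
    refine ⟨fun j hj => ?_, fun j => by simp [hg', hh']⟩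
    have hj' : ¬S (P (g.right.symm j)) := by
      rwa [← hg', Equiv.apply_symm_apply]
    simp [act, hg j hj, hh _ hj']
  inv_mem' := by
    rintro g ⟨hg, hg'⟩
    refine ⟨fun j hj => ?_, fun j => ?_⟩
    · simp [act, Perm.inv_def, hg _ (by rwa [hg'])]
    · simpa using (hg' (g.right⁻¹ j)).symm

variable {r n : ℕ}

lemma mem_blockSubgroup {P : Fin n → α} {S : α → Prop} {g : Grn r n} :
    g ∈ blockSubgroup r n P S ↔
      (∀ j, ¬S (P j) → Multiplicative.toAdd g.left j = 0) ∧ ∀ j, P (g.right j) = P j :=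
  Iff.rfl

lemma blockSubgroup_congr {P : Fin n → α} {S : α → Prop} {Q : Fin n → β} {T : β → Prop}
    (hPQ : ∀ j k, P j = P k ↔ Q j = Q k) (hST : ∀ j, S (P j) ↔ T (Q j)) :
    blockSubgroup r n P S = blockSubgroup r n Q T := by
  ext g
  simp only [mem_blockSubgroup, hPQ, hST]

lemma blockSubgroup_inf_blockSubgroup (P : Fin n → α) (S : α → Prop) (Q : Fin n → β)
    (T : β → Prop) :
    blockSubgroup r n P S ⊓ blockSubgroup r n Q T =
      blockSubgroup r n (fun j => toLex (P j, Q j)) (fun q => S (ofLex q).1 ∧ T (ofLex q).2) := by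
  ext g
  simp only [Subgroup.mem_inf, mem_blockSubgroup, toLex_inj, Prod.mk.injEq, ofLex_toLex,
    not_and_or, or_imp, forall_and]
  tauto

lemma map_conj_blockSubgroup (P : Fin n → α) (S : α → Prop) (d : Perm (Fin n)) :
    (blockSubgroup r n P S).map (MulAut.conj ((inr d : Grn r n)⁻¹)).toMonoidHom =
      blockSubgroup r n (fun j => P (d j)) S := by
  ext g
  rw [Subgroup.mem_map_equiv, MulAut.conj_symm_apply, inv_inv, mem_blockSubgroup,
    mem_blockSubgroup]
  simp only [mul_left, mul_right, inv_left, inv_right, left_inr, right_inr]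
  rw [← d.forall_congr_right, ← d.forall_congr_right (q := fun j => P _ = P j)]
  simp [act]

end BlockSubgroup

section Closure

variable {α : Type*}

def blockGens (r n : ℕ) (P : Fin n → α) (S : α → Prop) : Set (Grn r n) :=
  {g | (∃ j, S (P j) ∧ g = tGen r n j) ∨
    ∃ j k : Fin n, (k : ℕ) = j + 1 ∧ P j = P k ∧ g = sGen r n j k}

variable {r n : ℕ}

lemma blockGens_subset_PiSet (P : Fin n → α) (S : α → Prop) :
    blockGens r n P S ⊆ PiSet r n := by
  rintro g (⟨j, -, rfl⟩ | ⟨j, k, hk, -, rfl⟩)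
  · exact Or.inl ⟨j, rfl⟩
  · exact sGen_mem_PiSet hk

lemma apply_swap_of_eq {ι : Type*} [DecidableEq ι] {P : ι → α} {j k : ι} (h : P j = P k)
    (x : ι) :
    P (swap j k x) = P x := by
  rcases eq_or_ne x j with rfl | hxj
  · simp [h]
  rcases eq_or_ne x k with rfl | hxk
  · simp [h]
  · rw [swap_apply_of_ne_of_ne hxj hxk]

lemma blockGens_subset_blockSubgroup (P : Fin n → α) (S : α → Prop) :
    blockGens r n P S ⊆ blockSubgroup r n P S := by
  rintro g (⟨j, hj, rfl⟩ | ⟨j, k, -, hjk, rfl⟩)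
  · refine ⟨fun i hi => ?_, fun _ => rfl⟩
    have hij : i ≠ j := by rintro rfl; exact hi hj
    simp [tGen, Pi.single_eq_of_ne hij]
  · exact ⟨fun _ _ => rfl, apply_swap_of_eq hjk⟩

lemma inl_mem_closure_blockGens {P : Fin n → α} {S : α → Prop}
    {f : Multiplicative (Fin n → ZMod r)}
    (hf : ∀ j, ¬S (P j) → Multiplicative.toAdd f j = 0) :
    (inl f : Grn r n) ∈ Subgroup.closure (blockGens r n P S) := by
  have hf_prod : f = ∏ j, Multiplicative.ofAdd (Pi.single j (Multiplicative.toAdd f j)) := by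
    rw [← ofAdd_sum, Finset.univ_sum_single, ofAdd_toAdd]
  rw [← Subgroup.mem_comap, hf_prod]
  refine Subgroup.prod_mem _ fun j _ => Subgroup.mem_comap.2 ?_
  by_cases hj : S (P j)
  · obtain ⟨m, hm⟩ := ZMod.intCast_surjective (Multiplicative.toAdd f j)
    have : (inl (Multiplicative.ofAdd (Pi.single j (Multiplicative.toAdd f j))) : Grn r n) =
        tGen r n j ^ m := by
      rw [tGen, ← map_zpow, ← ofAdd_zsmul, ← Pi.single_smul', zsmul_one, hm]
    rw [this]
    exact zpow_mem (Subgroup.subset_closure (k := blockGens r n P S) (Or.inl ⟨j, hj, rfl⟩)) m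
  · simp [hf j hj]

lemma inr_mem_closure_blockGens [PartialOrder α] {P : Fin n → α} (hP : Monotone P)
    (S : α → Prop)
    {w : Perm (Fin n)} (hw : ∀ j, P (w j) = P j) :
    (inr w : Grn r n) ∈ Subgroup.closure (blockGens r n P S) := by
  induction w using Perm.induction_on_descent with
  | one => simp
  | step w j k hk hjk ih =>
    have hPjk : P j = P k := by
      refine le_antisymm (hP (Fin.le_def.2 (by omega))) ?_
      simpa only [hw] using hP hjk.le
    have hinr : (inr w : Grn r n) = inr (w * swap j k) * sGen r n j k := by
      rw [sGen, ← map_mul, mul_swap_mul_self]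
    rw [hinr]
    exact mul_mem (ih fun x => by simp [hw, apply_swap_of_eq hPjk])
      (Subgroup.subset_closure (Or.inr ⟨j, k, hk, hPjk, rfl⟩))

lemma blockSubgroup_eq_closure [PartialOrder α] {P : Fin n → α} (hP : Monotone P)
    (S : α → Prop) : blockSubgroup r n P S = Subgroup.closure (blockGens r n P S) := by
  refine le_antisymm (fun g ⟨hleft, hright⟩ => ?_)
    ((Subgroup.closure_le _).2 (blockGens_subset_blockSubgroup P S))
  rw [← inl_left_mul_inr_right g]
  exact mul_mem (inl_mem_closure_blockGens hleft) (inr_mem_closure_blockGens hP S hright)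

end Closure

section SignedComposition

/-- The index of the part of `μ` containing position `j` (positions counted from `0`). -/
def blockIdx : List ℤ → ℕ → ℕ
  | [], _ => 0
  | a :: μ, j => if j < a.natAbs then 0 else blockIdx μ (j - a.natAbs) + 1

lemma blockIdx_mono (μ : List ℤ) : Monotone (blockIdx μ) := by
  induction μ with
  | nil => exact fun _ _ _ => le_rfl
  | cons a μ ih =>
    intro j k hjk
    simp only [blockIdx]
    split_ifs
    all_goals first | omega | exact Nat.succ_le_succ (ih (by omega))

lemma absPrefix_zero (μ : List ℤ) : absPrefix μ 0 = 0 := by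
  simp [absPrefix]

lemma absPrefix_cons_succ (a : ℤ) (μ : List ℤ) (i : ℕ) :
    absPrefix (a :: μ) (i + 1) = a.natAbs + absPrefix μ i := by
  simp [absPrefix]

lemma blockIdx_eq_iff {μ : List ℤ} (hμ : ∀ x ∈ μ, x ≠ 0) {i j : ℕ}
    (hj : j < (μ.map Int.natAbs).sum) :
    blockIdx μ j = i ↔ i < μ.length ∧ absPrefix μ i ≤ j ∧ j < absPrefix μ (i + 1) := by
  induction μ generalizing i j with
  | nil => simp at hj
  | cons a μ ih =>
    simp only [List.map_cons, List.sum_cons, List.mem_cons, forall_eq_or_imp] at hj hμ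
    rw [blockIdx]
    by_cases hja : j < a.natAbs
    · rw [if_pos hja]
      cases i with
      | zero => simpa [absPrefix_zero, absPrefix_cons_succ] using hja
      | succ i =>
        rw [absPrefix_cons_succ]
        exact iff_of_false (by omega) (by omega)
    · rw [if_neg hja]
      cases i with
      | zero => simpa [absPrefix_zero, absPrefix_cons_succ] using hja
      | succ i =>
        rw [absPrefix_cons_succ, absPrefix_cons_succ, List.length_cons, Nat.add_right_cancel_iff,
          ih hμ.2 (by omega)]
        omega

variable {r n : ℕ} {μ : List ℤ}

lemma PiMu_eq_blockGens (hμ : IsSignedComp n μ) :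
    PiMu r n μ = blockGens r n (fun j => blockIdx μ j) (fun b => 0 < μ.getD b 0) := by
  have hblock (j : Fin n) {i : ℕ} :=
    blockIdx_eq_iff hμ.1 (i := i) (j := j) (by rw [hμ.2]; exact j.isLt)
  ext g
  simp only [PiMu, blockGens, Set.mem_ofPred_eq]
  refine or_congr (exists_congr fun j => and_congr_left' ⟨?_, fun hpos => ?_⟩)
    (exists_congr fun j => exists_congr fun k => and_congr_right fun hk =>
      and_congr_left' ⟨?_, fun hjk => ?_⟩)
  · rintro ⟨i, hi, hpos, hle, hlt⟩
    rwa [(hblock j).2 ⟨hi, hle, hlt⟩]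
  · obtain ⟨hi, hle, hlt⟩ := (hblock j).1 rfl
    exact ⟨_, hi, hpos, hle, hlt⟩
  · rintro ⟨i, hi, hle, hlt⟩
    rw [(hblock j).2 ⟨hi, hle, by omega⟩, (hblock k).2 ⟨hi, by omega, hlt⟩]
  · obtain ⟨hi, hle, -⟩ := (hblock j).1 rfl
    obtain ⟨-, -, hlt⟩ := (hblock k).1 rfl
    exact ⟨_, hi, hle, hjk ▸ hlt⟩

lemma Gmu_eq_blockSubgroup (hμ : IsSignedComp n μ) :
    Gmu r n μ = blockSubgroup r n (fun j => blockIdx μ j) (fun b => 0 < μ.getD b 0) := by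
  rw [Gmu, PiMu_eq_blockGens hμ,
    blockSubgroup_eq_closure (fun _ _ h => blockIdx_mono μ h)]

lemma blockIdx_cons_zero {a : ℤ} (ha : a ≠ 0) (μ : List ℤ) : blockIdx (a :: μ) 0 = 0 := by
  simp [blockIdx, ha]

lemma blockIdx_cons_succ_of_natAbs_eq_one {a : ℤ} (ha : a.natAbs = 1) (μ : List ℤ) (j : ℕ) :
    blockIdx (a :: μ) (j + 1) = blockIdx μ j + 1 := by
  simp [blockIdx, ha]

lemma blockIdx_cons_succ_of_natAbs_eq_succ {a b : ℤ} (hab : b.natAbs = a.natAbs + 1)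
    (μ : List ℤ) (j : ℕ) : blockIdx (b :: μ) (j + 1) = blockIdx (a :: μ) j := by
  simp only [blockIdx, hab, Nat.add_lt_add_iff_right, Nat.add_sub_add_right]

def RealizesColouring {α : Type*} (σ : List ℤ) (P : Fin n → α) (S : α → Prop) : Prop :=
  (∀ j k : Fin n, blockIdx σ j = blockIdx σ k ↔ P j = P k) ∧
    ∀ j : Fin n, 0 < σ.getD (blockIdx σ j) 0 ↔ S (P j)

lemma realizesColouring_cons_of_forall_ne {α : Type*} {P : Fin (n + 1) → α} {S : α → Prop}
    [Decidable (S (P 0))] {σ : List ℤ} (hσ : RealizesColouring σ (fun j => P j.succ) S)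
    (hnew : ∀ k : Fin n, P 0 ≠ P k.succ) :
    RealizesColouring ((if S (P 0) then 1 else -1) :: σ) P S := by
  set x : ℤ := if S (P 0) then 1 else -1 with hx
  have hx1 : x.natAbs = 1 := by rw [hx]; split_ifs <;> rfl
  have hx0 : x ≠ 0 := by rw [hx]; split_ifs <;> decide
  refine ⟨fun j k => ?_, fun j => ?_⟩
  · cases j using Fin.cases <;> cases k using Fin.cases <;>
      simp [blockIdx_cons_zero hx0, blockIdx_cons_succ_of_natAbs_eq_one hx1, hσ.1, hnew,
        (hnew _).symm]
  · cases j using Fin.cases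
    · rw [Fin.val_zero, blockIdx_cons_zero hx0, List.getD_cons_zero, hx]
      split_ifs <;> simp [*]
    · rw [Fin.val_succ, blockIdx_cons_succ_of_natAbs_eq_one hx1, List.getD_cons_succ, hσ.2]

lemma realizesColouring_lengthen_head {α : Type*} {P : Fin (n + 1) → α} {S : α → Prop}
    {a : ℤ} (ha : a ≠ 0) {τ : List ℤ}
    (hσ : RealizesColouring (a :: τ) (fun j => P j.succ) S)
    (hn : 0 < n) (hP0 : P 0 = P (Fin.succ ⟨0, hn⟩)) :
    RealizesColouring ((if 0 < a then a + 1 else a - 1) :: τ) P S := by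
  set b : ℤ := if 0 < a then a + 1 else a - 1 with hb
  have hb1 : b.natAbs = a.natAbs + 1 := by rw [hb]; split_ifs <;> omega
  have hb0 : b ≠ 0 := by rw [hb]; split_ifs <;> omega
  -- Position `0` is merged with position `1`, i.e. with position `0` of the tail.
  let e : Fin (n + 1) → Fin n := Fin.cases ⟨0, hn⟩ id
  have hblk (j : Fin (n + 1)) : blockIdx (b :: τ) j = blockIdx (a :: τ) (e j) := by
    cases j using Fin.cases
    · simp [e, blockIdx_cons_zero hb0, blockIdx_cons_zero ha]
    · exact blockIdx_cons_succ_of_natAbs_eq_succ hb1 τ _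
  have hPe (j : Fin (n + 1)) : P j = P (e j).succ := by
    cases j using Fin.cases
    · exact hP0
    · rfl
  have hsign (i : ℕ) : 0 < (b :: τ).getD i 0 ↔ 0 < (a :: τ).getD i 0 := by
    cases i
    · simp only [List.getD_cons_zero, hb]
      split_ifs <;> omega
    · rfl
  refine ⟨fun j k => ?_, fun j => ?_⟩
  · rw [hblk, hblk, hσ.1, hPe j, hPe k]
  · rw [hblk, hsign, hσ.2, hPe j]

theorem exists_isSignedComp_realizesColouring {α : Type*} [PartialOrder α] (S : α → Prop)
    (P : Fin n → α) (hP : Monotone P) :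
    ∃ σ : List ℤ, IsSignedComp n σ ∧ RealizesColouring σ P S := by
  classical
  induction n with
  | zero => exact ⟨[], ⟨by simp, by simp⟩, fun j => j.elim0, fun j => j.elim0⟩
  | succ n ih =>
  obtain ⟨σ, ⟨hσ0, hσsum⟩, hσ⟩ :=
    ih (fun j => P j.succ) (hP.comp (Fin.strictMono_succ.monotone))
  by_cases hnew : ∀ k : Fin n, P 0 ≠ P k.succ
  · refine ⟨_, ⟨?_, ?_⟩, realizesColouring_cons_of_forall_ne hσ hnew⟩ <;>
      split_ifs <;> simp_all [add_comm]
  push Not at hnew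
  obtain ⟨k, hk⟩ := hnew
  have hP0 : P 0 = P (Fin.succ ⟨0, k.pos⟩) :=
    le_antisymm (hP (Fin.zero_le _)) (hk ▸ hP (Fin.succ_le_succ_iff.2 (Nat.zero_le k.val)))
  obtain _ | ⟨a, τ⟩ := σ
  · exact absurd hσsum (by simpa using k.pos.ne)
  have ha : a ≠ 0 := hσ0 a List.mem_cons_self
  refine ⟨_, ⟨?_, ?_⟩, realizesColouring_lengthen_head ha hσ k.pos hP0⟩
  · simp only [List.mem_cons, forall_eq_or_imp] at hσ0 ⊢
    exact ⟨by split_ifs <;> omega, hσ0.2⟩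
  · simp only [List.map_cons, List.sum_cons] at hσsum ⊢
    split_ifs <;> omega

lemma exists_Gmu_eq_blockSubgroup {α : Type*} [PartialOrder α] {P : Fin n → α}
    (hP : Monotone P) (S : α → Prop) :
    ∃ σ : List ℤ, IsSignedComp n σ ∧ Gmu r n σ = blockSubgroup r n P S := by
  obtain ⟨σ, hσ, hfib, hsgn⟩ := exists_isSignedComp_realizesColouring S P hP
  exact ⟨σ, hσ, (Gmu_eq_blockSubgroup hσ).trans (blockSubgroup_congr hfib hsgn)⟩

end SignedComposition

section MinimalCosetRepresentatives

variable {r n : ℕ}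

lemma monotone_toLex_blockIdx_apply {ν : List ℤ} (hν : IsSignedComp n ν) {d : Perm (Fin n)}
    (hd : d⁻¹ ∈ Dset r n ν) : Monotone fun j : Fin n => toLex (blockIdx ν j, d j) := by
  refine Fin.monotone_of_adjacent_le fun j k hk => ?_
  rcases (blockIdx_mono ν (by omega : (j : ℕ) ≤ k)).lt_or_eq with hlt | heq
  · exact Prod.Lex.toLex_le_toLex.2 (Or.inl hlt)
  refine Prod.Lex.toLex_le_toLex.2 (Or.inr ⟨heq, not_lt.1 fun hdesc => ?_⟩)
  have hswap : swap j k * d⁻¹ * d⁻¹⁻¹ ∈ youngS r n ν := by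
    rw [mul_inv_cancel_right, youngS, Subgroup.mem_comap, Gmu_eq_blockSubgroup hν]
    exact blockGens_subset_blockSubgroup _ _ (Or.inr ⟨j, k, hk, heq, rfl⟩)
  have hmin := hd _ hswap
  rw [len_inr, len_inr, invCount_inv, ← invCount_inv (swap j k * d⁻¹), mul_inv_rev, inv_inv,
    swap_inv] at hmin
  have := invCount_mul_swap_of_gt hk hdesc
  omega

end MinimalCosetRepresentatives

theorem stmt4_general (r n : ℕ) (μ ν : List ℤ)
    (hμ : IsSignedComp n μ) (hν : IsSignedComp n ν)
    (d : Equiv.Perm (Fin n)) (hd : d ∈ DD r n μ ν) :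
    (∃ J ⊆ PiSet r n,
        (Gmu r n μ).map (MulAut.conj ((inr d : Grn r n)⁻¹)).toMonoidHom ⊓ Gmu r n ν =
          Subgroup.closure J) ∧
    (∃ σ : List ℤ, IsSignedComp n σ ∧
        (Gmu r n μ).map (MulAut.conj ((inr d : Grn r n)⁻¹)).toMonoidHom ⊓ Gmu r n ν =
          Gmu r n σ) := by
  set Q : Fin n → ℕ ×ₗ ℕ := fun j => toLex (blockIdx ν j, blockIdx μ (d j))
  have hinter : (Gmu r n μ).map (MulAut.conj ((inr d : Grn r n)⁻¹)).toMonoidHom ⊓ Gmu r n ν =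
      blockSubgroup r n Q fun q => 0 < ν.getD (ofLex q).1 0 ∧ 0 < μ.getD (ofLex q).2 0 := by
    rw [Gmu_eq_blockSubgroup hμ, Gmu_eq_blockSubgroup hν, map_conj_blockSubgroup, inf_comm,
      blockSubgroup_inf_blockSubgroup]
  have hQ : Monotone Q := fun j k hjk => by
    obtain hlt | ⟨heq, hle⟩ :=
      Prod.Lex.toLex_le_toLex.1 (monotone_toLex_blockIdx_apply hν hd.2 hjk)
    exacts [Prod.Lex.toLex_le_toLex.2 (Or.inl hlt),
      Prod.Lex.toLex_le_toLex.2 (Or.inr ⟨heq, blockIdx_mono μ hle⟩)]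
  obtain ⟨σ, hσ, hσQ⟩ := exists_Gmu_eq_blockSubgroup (r := r) hQ
    fun q => 0 < ν.getD (ofLex q).1 0 ∧ 0 < μ.getD (ofLex q).2 0
  exact ⟨⟨_, blockGens_subset_PiSet _ _, hinter.trans (blockSubgroup_eq_closure hQ _)⟩,
    ⟨σ, hσ, hinter.trans hσQ.symm⟩⟩

theorem stmt4 (r n : ℕ) (hr : 2 ≤ r) (hn : 1 ≤ n) (μ ν : List ℤ)
    (hμ : IsSignedComp n μ) (hν : IsSignedComp n ν)
    (d : Equiv.Perm (Fin n)) (hd : d ∈ DD r n μ ν) :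
    (∃ J ⊆ PiSet r n,
        (Gmu r n μ).map (MulAut.conj ((inr d : Grn r n)⁻¹)).toMonoidHom ⊓ Gmu r n ν =
          Subgroup.closure J) ∧
    (∃ σ : List ℤ, IsSignedComp n σ ∧
        (Gmu r n μ).map (MulAut.conj ((inr d : Grn r n)⁻¹)).toMonoidHom ⊓ Gmu r n ν =
          Gmu r n σ) :=
  stmt4_general r n μ ν hμ hν d hd

end CycSol
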